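/- In any Minkowski space, every complete convex body K satisfies j(K) = s(K)/(s(K)+1), where j(K) = R(K)/D(K) is the Jung ratio and s(K) the Minkowski asymmetry. In particular the Jung constant of the space equals s_max/(s_max+1), where s_max is the maximal Minkowski asymmetry over complete bodies. -/

import Mathlib

open Set Pointwise

/-- `V n` is `ℝ^n` (as a Euclidean space, also used as carrier for general
Minkowski spaces whose unit ball `B` is given as a set). -/
abbrev V (n : ℕ) := EuclideanSpace ℝ (Fin n)

/-- A convex body: compact, convex, with nonempty interior. -/
def IsConvexBody {n : ℕ} (K : Set (V n)) : Prop :=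
  Convex ℝ K ∧ IsCompact K ∧ (interior K).Nonempty

/-- A (centrally) symmetric unit ball of a norm. -/
def IsSymUnitBall {n : ℕ} (B : Set (V n)) : Prop :=
  IsConvexBody B ∧ B = -B

/-- Circumradius of `K` with respect to the unit ball `B`. -/
noncomputable def circum {n : ℕ} (B K : Set (V n)) : ℝ :=
  sInf {ρ : ℝ | 0 < ρ ∧ ∃ c : V n, K ⊆ c +ᵥ ρ • B}

/-- Inradius of `K` with respect to the unit ball `B`. -/
noncomputable def inrad {n : ℕ} (B K : Set (V n)) : ℝ :=
  sSup {ρ : ℝ | 0 < ρ ∧ ∃ c : V n, c +ᵥ ρ • B ⊆ K}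

/-- Diameter of `K` in the norm with unit ball `B` (via the Minkowski gauge). -/
noncomputable def mdiam {n : ℕ} (B K : Set (V n)) : ℝ :=
  sSup {d : ℝ | ∃ x ∈ K, ∃ y ∈ K, d = gauge B (x - y)}

/-- Minkowski asymmetry of `K`. -/
noncomputable def asym {n : ℕ} (K : Set (V n)) : ℝ :=
  sInf {ρ : ℝ | 0 < ρ ∧ ∃ c : V n, -K ⊆ c +ᵥ ρ • K}

/-- `K` is complete (diametrically maximal) w.r.t. the unit ball `B`. -/
def IsCompleteBody {n : ℕ} (B K : Set (V n)) : Prop :=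
  IsConvexBody K ∧ ∀ x : V n, x ∉ K → mdiam B K < mdiam B (K ∪ {x})

/-- `Kstar` is a completion of `K` w.r.t. the unit ball `B`. -/
def IsCompletionOf {n : ℕ} (B Kstar K : Set (V n)) : Prop :=
  IsCompleteBody B Kstar ∧ K ⊆ Kstar ∧ mdiam B Kstar = mdiam B K

/-- Jung ratio `R(K)/D(K)`. -/
noncomputable def jungRatio {n : ℕ} (B K : Set (V n)) : ℝ :=
  circum B K / mdiam B K

/-- Jung constant of the Minkowski space with unit ball `B`. -/
noncomputable def jungConst {n : ℕ} (B : Set (V n)) : ℝ :=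
  sSup {j : ℝ | ∃ K : Set (V n), IsConvexBody K ∧ j = jungRatio B K}

/-- Maximal Minkowski asymmetry over complete bodies. -/
noncomputable def asymConst {n : ℕ} (B : Set (V n)) : ℝ :=
  sSup {s : ℝ | ∃ K : Set (V n), IsCompleteBody B K ∧ s = asym K}

/-- Banach–Mazur distance between `K` and `C`. -/
noncomputable def dBM {n : ℕ} (K C : Set (V n)) : ℝ :=
  sInf {ρ : ℝ | 0 < ρ ∧ ∃ (A : (V n) ≃ᵃ[ℝ] (V n)) (x : V n),
    K ⊆ A '' C ∧ A '' C ⊆ x +ᵥ ρ • K}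

/-- `S` is a `k`-dimensional simplex. -/
def IsSimplexDim {n : ℕ} (k : ℕ) (S : Set (V n)) : Prop :=
  ∃ v : Fin (k + 1) → V n, AffineIndependent ℝ v ∧ S = convexHull ℝ (Set.range v)

/-- Helly property with parameter `k` for translates of `B`. -/
def HellyProp {n : ℕ} (B : Set (V n)) (k : ℕ) : Prop :=
  ∀ X : Set (V n), X.Nonempty →
    (∀ J : Finset (V n), ↑J ⊆ X → J.card ≤ k + 1 →
      (⋂ x ∈ (J : Set (V n)), (x +ᵥ B)).Nonempty) →
    (⋂ x ∈ X, (x +ᵥ B)).Nonempty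

/-- Helly dimension of `B`: the least positive `k` with the Helly property. -/
noncomputable def hellyDim {n : ℕ} (B : Set (V n)) : ℕ :=
  sInf {k : ℕ | 0 < k ∧ HellyProp B k}

/-- `K` is of constant width w.r.t. the unit ball `B`: `K - K` is a dilate of `B`. -/
def IsConstWidth {n : ℕ} (B K : Set (V n)) : Prop :=
  ∃ γ : ℝ, 0 < γ ∧ K - K = γ • B

/-- A regular `n`-simplex in Euclidean space. -/
def IsRegularSimplex {n : ℕ} (T : Set (V n)) : Prop :=
  ∃ v : Fin (n + 1) → V n, AffineIndependent ℝ v ∧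
    (∀ i j k l, i ≠ j → k ≠ l → dist (v i) (v j) = dist (v k) (v l)) ∧
    T = convexHull ℝ (Set.range v)

/-- The Euclidean unit ball in `ℝ^n`. -/
noncomputable def euclBall (n : ℕ) : Set (V n) := Metric.closedBall 0 1

/-- Pseudo completion of `K` with respect to the circumcenter `c`. -/
noncomputable def pseudoCompletion {n : ℕ} (B K : Set (V n)) (c : V n) : Set (V n) :=
  convexHull ℝ (K ∪ (c +ᵥ (mdiam B K - circum B K) • B))

/-!
A complete body `K` of diameter `D` has the spherical intersection property: if `K ⊆ c + ρB`
with `ρ < D`, then `c + (D - ρ)B ⊆ K`, because a point of that ball outside `K` could be adjoined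
without increasing the diameter. Reflecting `K` through these balls gives `-K ⊆ c' + sK` with
`s = ρ / (D - ρ)`, so `s(K) ≤ R / (D - R)`. Conversely `-K ⊆ c + sK` places `K` in a ball of
radius `s D / (1 + s)`, so `R (1 + s(K)) ≤ s(K) D`. Hence `s(K) = R / (D - R)`, which is
`R / D = s(K) / (s(K) + 1)`.

For the Jung constant, every body lies in a completion of the same diameter, which can only raise
`R / D`, and `s ↦ s / (s + 1)` is increasing and continuous; the asymmetries of complete bodies
are bounded (by `n`) thanks to Bohnenblust's inequality `R ≤ n / (n + 1) D`.
-/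

open Bornology Filter Topology

variable {n : ℕ} {B K L : Set (V n)}

namespace IsConvexBody

theorem nonempty (hK : IsConvexBody K) : K.Nonempty := hK.2.2.mono interior_subset

theorem isBounded (hK : IsConvexBody K) : IsBounded K := hK.2.1.isBounded

theorem exists_vadd_smul_subset (hK : IsConvexBody K) (hBbdd : IsBounded B) :
    ∃ ρ : ℝ, 0 < ρ ∧ ∃ c : V n, c +ᵥ ρ • B ⊆ K := by
  obtain ⟨c, hc⟩ := hK.2.2
  obtain ⟨δ, hδ, hball⟩ := Metric.isOpen_iff.mp isOpen_interior c hc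
  obtain ⟨r, hr, hBr⟩ := hBbdd.subset_ball_lt 0 0
  refine ⟨δ / r, by positivity, c, ?_⟩
  calc c +ᵥ (δ / r) • B ⊆ c +ᵥ (δ / r) • Metric.ball (0 : V n) r := by gcongr
    _ = Metric.ball c δ := by
      rw [smul_ball (by positivity), Metric.vadd_ball, smul_zero, vadd_eq_add, add_zero,
        Real.norm_of_nonneg (by positivity), div_mul_cancel₀ _ hr.ne']
    _ ⊆ K := hball.trans interior_subset

end IsConvexBody

theorem gauge_smul_eq_mul {E : Type*} [AddCommGroup E] [Module ℝ E] {s : Set E} {a : ℝ}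
    (ha : 0 ≤ a) (x : E) : gauge s (a • x) = a * gauge s x := by
  rw [gauge_smul_of_nonneg ha, smul_eq_mul]

namespace IsSymUnitBall

variable (hB : IsSymUnitBall B)
include hB

theorem zero_mem_interior : (0 : V n) ∈ interior B := by
  obtain ⟨⟨hconv, -, x, hx⟩, hsymm⟩ := hB
  have hx' : -x ∈ interior B := by
    rw [hsymm]
    exact interior_maximal (neg_subset_neg.mpr interior_subset) isOpen_interior.neg
      (neg_mem_neg.mpr hx)
  have h0 : (0 : V n) ∈ segment ℝ x (-x) :=
    ⟨1 / 2, 1 / 2, by norm_num, by norm_num, by norm_num, by module⟩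
  exact hconv.interior.segment_subset hx hx' h0

theorem mem_nhds_zero : B ∈ 𝓝 (0 : V n) := mem_interior_iff_mem_nhds.mp hB.zero_mem_interior

theorem absorbent : Absorbent ℝ B := absorbent_nhds_zero hB.mem_nhds_zero

theorem neg_mem {x : V n} (hx : x ∈ B) : -x ∈ B := by
  rw [hB.2]; exact neg_mem_neg.mpr hx

theorem gauge_neg (x : V n) : gauge B (-x) = gauge B x :=
  _root_.gauge_neg (fun _ => hB.neg_mem) x

theorem gauge_sub_comm (x y : V n) : gauge B (x - y) = gauge B (y - x) := by
  rw [← hB.gauge_neg, neg_sub]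

theorem gauge_add_le (x y : V n) : gauge B (x + y) ≤ gauge B x + gauge B y :=
  _root_.gauge_add_le hB.1.1 hB.absorbent x y

theorem gauge_sub_le (x y z : V n) : gauge B (x - z) ≤ gauge B (x - y) + gauge B (y - z) := by
  simpa using hB.gauge_add_le (x - y) (y - z)

theorem gauge_pos {x : V n} : 0 < gauge B x ↔ x ≠ 0 :=
  _root_.gauge_pos hB.absorbent (NormedSpace.isVonNBounded_iff ℝ |>.mpr hB.1.2.1.isBounded)

theorem mem_iff_gauge_le_one {x : V n} : x ∈ B ↔ gauge B x ≤ 1 := by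
  rw [gauge_le_one_iff_mem_closure hB.1.1 hB.mem_nhds_zero, hB.1.2.1.isClosed.closure_eq]

theorem mem_vadd_smul_iff {t : ℝ} (ht : 0 < t) {x c : V n} :
    x ∈ c +ᵥ t • B ↔ gauge B (x - c) ≤ t := by
  rw [mem_vadd_set_iff_neg_vadd_mem, vadd_eq_add, neg_add_eq_sub,
    mem_smul_set_iff_inv_smul_mem₀ ht.ne', hB.mem_iff_gauge_le_one,
    gauge_smul_eq_mul (inv_nonneg.mpr ht.le), inv_mul_le_iff₀ ht, mul_one]

theorem subset_vadd_smul_iff {t : ℝ} (ht : 0 < t) {c : V n} :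
    K ⊆ c +ᵥ t • B ↔ ∀ x ∈ K, gauge B (x - c) ≤ t :=
  forall₂_congr fun _ _ => hB.mem_vadd_smul_iff ht

theorem bddAbove_gauge_image {S : Set (V n)} (hS : IsBounded S) : BddAbove (gauge B '' S) :=
  let ⟨_, hlip⟩ := hB.1.1.lipschitz_gauge hB.mem_nhds_zero
  (hlip.isBounded_image hS).bddAbove

theorem exists_gauge_eq_one_smul [Nontrivial (V n)] (v : V n) :
    ∃ u : V n, gauge B u = 1 ∧ v = gauge B v • u := by
  have normalize : ∀ w : V n, w ≠ 0 → gauge B ((gauge B w)⁻¹ • w) = 1 := fun w hw => by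
    rw [gauge_smul_eq_mul (inv_nonneg.mpr (gauge_nonneg w)),
      inv_mul_cancel₀ (hB.gauge_pos.mpr hw).ne']
  by_cases hv : v = 0
  · obtain ⟨w, hw⟩ := exists_ne (0 : V n)
    exact ⟨_, normalize w hw, by simp [hv]⟩
  · refine ⟨_, normalize v hv, ?_⟩
    rw [smul_smul, mul_inv_cancel₀ (hB.gauge_pos.mpr hv).ne', one_smul]

end IsSymUnitBall

theorem mdiam_nonneg : 0 ≤ mdiam B K :=
  Real.sSup_nonneg fun _ ⟨_, _, _, _, hd⟩ => hd ▸ gauge_nonneg _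

theorem mdiam_le {a : ℝ} (ha : 0 ≤ a) (h : ∀ x ∈ K, ∀ y ∈ K, gauge B (x - y) ≤ a) :
    mdiam B K ≤ a :=
  Real.sSup_le (fun _ ⟨x, hx, y, hy, hd⟩ => hd ▸ h x hx y hy) ha

theorem mdiam_eq_zero_of_subsingleton [Subsingleton (V n)] : mdiam B K = 0 :=
  le_antisymm (mdiam_le le_rfl fun x _ y _ => by rw [Subsingleton.elim x y, sub_self, gauge_zero])
    mdiam_nonneg

namespace IsSymUnitBall

variable (hB : IsSymUnitBall B)
include hB

theorem gauge_sub_le_mdiam (hK : IsBounded K) {x y : V n} (hx : x ∈ K) (hy : y ∈ K) :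
    gauge B (x - y) ≤ mdiam B K := by
  refine le_csSup ((hB.bddAbove_gauge_image (isBounded_sub hK hK)).mono ?_) ⟨x, hx, y, hy, rfl⟩
  rintro _ ⟨x, hx, y, hy, rfl⟩
  exact ⟨x - y, sub_mem_sub hx hy, rfl⟩

theorem mdiam_mono (hKL : K ⊆ L) (hL : IsBounded L) : mdiam B K ≤ mdiam B L :=
  mdiam_le mdiam_nonneg fun _ hx _ hy => hB.gauge_sub_le_mdiam hL (hKL hx) (hKL hy)

theorem mdiam_union_singleton_le (hK : IsBounded K) {z : V n}
    (hz : ∀ x ∈ K, gauge B (x - z) ≤ mdiam B K) : mdiam B (K ∪ {z}) ≤ mdiam B K := by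
  refine mdiam_le mdiam_nonneg ?_
  rintro x (hx | rfl) y (hy | rfl)
  · exact hB.gauge_sub_le_mdiam hK hx hy
  · exact hz x hx
  · rw [hB.gauge_sub_comm]; exact hz y hy
  · rw [sub_self, gauge_zero]; exact mdiam_nonneg

theorem mdiam_closure_le (hK : IsBounded K) : mdiam B (closure K) ≤ mdiam B K := by
  set P := {p : V n × V n | gauge B (p.1 - p.2) ≤ mdiam B K}
  have hclosed : IsClosed P :=
    isClosed_le ((continuous_gauge hB.1.1 hB.mem_nhds_zero).comp
      (continuous_fst.sub continuous_snd)) continuous_const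
  have hprod : closure K ×ˢ closure K ⊆ P := by
    rw [← closure_prod_eq]
    exact closure_minimal (fun p hp => hB.gauge_sub_le_mdiam hK hp.1 hp.2) hclosed
  exact mdiam_le mdiam_nonneg fun x hx y hy => hprod (mk_mem_prod hx hy)

theorem convexOn_gauge_sub (y : V n) : ConvexOn ℝ univ fun z => gauge B (z - y) := by
  refine ⟨convex_univ, fun z _ w _ a b ha hb hab => ?_⟩
  have hcomb : a • z + b • w - y = a • (z - y) + b • (w - y) := by
    linear_combination (norm := module) hab • y
  simp only [hcomb, smul_eq_mul, ← gauge_smul_eq_mul ha, ← gauge_smul_eq_mul hb]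
  exact hB.gauge_add_le _ _

theorem mdiam_convexHull_le (hK : IsBounded K) : mdiam B (convexHull ℝ K) ≤ mdiam B K := by
  refine mdiam_le mdiam_nonneg fun x hx y hy => ?_
  obtain ⟨x', hx', hxx'⟩ :=
    (hB.convexOn_gauge_sub y).exists_ge_of_mem_convexHull (subset_univ K) hx
  obtain ⟨y', hy', hyy'⟩ :=
    (hB.convexOn_gauge_sub x').exists_ge_of_mem_convexHull (subset_univ K) hy
  calc gauge B (x - y) ≤ gauge B (x' - y) := hxx'
    _ = gauge B (y - x') := hB.gauge_sub_comm _ _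
    _ ≤ gauge B (y' - x') := hyy'
    _ ≤ mdiam B K := hB.gauge_sub_le_mdiam hK hy' hx'

end IsSymUnitBall

theorem circum_nonneg : 0 ≤ circum B K := Real.sInf_nonneg fun _ hρ => hρ.1.le

theorem circum_le {ρ : ℝ} (hρ : 0 < ρ) {c : V n} (h : K ⊆ c +ᵥ ρ • B) :
    circum B K ≤ ρ :=
  csInf_le ⟨0, fun _ hρ => hρ.1.le⟩ ⟨hρ, c, h⟩

theorem IsSymUnitBall.circum_set_nonempty (hB : IsSymUnitBall B) (hK : IsBounded K) :
    {ρ : ℝ | 0 < ρ ∧ ∃ c : V n, K ⊆ c +ᵥ ρ • B}.Nonempty := by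
  obtain ⟨t, ht⟩ := hB.bddAbove_gauge_image hK
  have hpos : 0 < max t 1 := lt_max_of_lt_right one_pos
  refine ⟨max t 1, hpos, 0, (hB.subset_vadd_smul_iff hpos).mpr fun x hx => ?_⟩
  rw [sub_zero]
  exact (ht ⟨x, hx, rfl⟩).trans (le_max_left _ _)

theorem IsSymUnitBall.circum_mono (hB : IsSymUnitBall B) (hKL : K ⊆ L) (hL : IsBounded L) :
    circum B K ≤ circum B L :=
  csInf_le_csInf ⟨0, fun _ hρ => hρ.1.le⟩ (hB.circum_set_nonempty hL)
    fun _ ⟨hρ, c, hc⟩ => ⟨hρ, c, hKL.trans hc⟩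

theorem asym_nonneg : 0 ≤ asym K := Real.sInf_nonneg fun _ hρ => hρ.1.le

theorem asym_le {ρ : ℝ} (hρ : 0 < ρ) {c : V n} (h : -K ⊆ c +ᵥ ρ • K) : asym K ≤ ρ :=
  csInf_le ⟨0, fun _ hρ => hρ.1.le⟩ ⟨hρ, c, h⟩

theorem asym_eq_zero_of_subsingleton [Subsingleton (V n)] (hK : K.Nonempty) : asym K = 0 := by
  obtain ⟨k, hk⟩ := hK
  refine le_antisymm (le_of_forall_pos_le_add fun ε hε => ?_) asym_nonneg
  rw [zero_add]
  exact asym_le hε (c := 0) fun x _ => ⟨ε • k, smul_mem_smul_set hk, Subsingleton.elim _ _⟩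

section Nontrivial

variable [Nontrivial (V n)]

namespace IsSymUnitBall

variable (hB : IsSymUnitBall B)
include hB

theorem gauge_sub_add_le_mdiam (hK : IsBounded K) {ρ : ℝ} (hρ : 0 < ρ) {c : V n}
    (hball : c +ᵥ ρ • B ⊆ K) {x : V n} (hx : x ∈ K) :
    gauge B (x - c) + ρ ≤ mdiam B K := by
  obtain ⟨u, hu, hxu⟩ := hB.exists_gauge_eq_one_smul (x - c)
  have hopp : c - ρ • u ∈ K := hball <| (hB.mem_vadd_smul_iff hρ).mpr <| by
    rw [sub_sub_cancel_left, hB.gauge_neg, gauge_smul_eq_mul hρ.le, hu, mul_one]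
  have hsplit : x - (c - ρ • u) = (gauge B (x - c) + ρ) • u := by
    rw [add_smul, ← hxu]; abel
  calc gauge B (x - c) + ρ = gauge B (x - (c - ρ • u)) := by
        rw [hsplit, gauge_smul_eq_mul (add_nonneg (gauge_nonneg _) hρ.le), hu, mul_one]
    _ ≤ mdiam B K := hB.gauge_sub_le_mdiam hK hx hopp

theorem two_mul_le_mdiam (hK : IsBounded K) {ρ : ℝ} (hρ : 0 < ρ) {c : V n}
    (hball : c +ᵥ ρ • B ⊆ K) : 2 * ρ ≤ mdiam B K := by
  obtain ⟨u, hu, -⟩ := hB.exists_gauge_eq_one_smul 0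
  have hgauge : gauge B (c + ρ • u - c) = ρ := by
    rw [add_sub_cancel_left, gauge_smul_eq_mul hρ.le, hu, mul_one]
  have hmem : c + ρ • u ∈ K := hball <| (hB.mem_vadd_smul_iff hρ).mpr hgauge.le
  linarith [hB.gauge_sub_add_le_mdiam hK hρ hball hmem]

theorem subset_vadd_smul_mdiam_sub (hK : IsBounded K) {ρ : ℝ} (hρ : 0 < ρ) {c : V n}
    (hball : c +ᵥ ρ • B ⊆ K) : K ⊆ c +ᵥ (mdiam B K - ρ) • B :=
  (hB.subset_vadd_smul_iff (by linarith [hB.two_mul_le_mdiam hK hρ hball])).mpr fun _ hx => by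
    linarith [hB.gauge_sub_add_le_mdiam hK hρ hball hx]

theorem circum_lt_mdiam (hK : IsConvexBody K) : circum B K < mdiam B K := by
  obtain ⟨ρ, hρ, c, hball⟩ := hK.exists_vadd_smul_subset hB.1.isBounded
  have h2ρ := hB.two_mul_le_mdiam hK.isBounded hρ hball
  calc circum B K ≤ mdiam B K - ρ :=
        circum_le (by linarith) (hB.subset_vadd_smul_mdiam_sub hK.isBounded hρ hball)
    _ < mdiam B K := by linarith

theorem mdiam_pos (hK : IsConvexBody K) : 0 < mdiam B K :=
  circum_nonneg.trans_lt (hB.circum_lt_mdiam hK)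

end IsSymUnitBall

end Nontrivial

theorem IsSymUnitBall.circum_mul_one_add_le (hB : IsSymUnitBall B) (hK : IsBounded K)
    (hD : 0 < mdiam B K) {ρ : ℝ} (hρ : 0 < ρ) {c : V n} (h : -K ⊆ c +ᵥ ρ • K) :
    circum B K * (1 + ρ) ≤ ρ * mdiam B K := by
  have h1ρ : 0 < 1 + ρ := by linarith
  have hcover : K ⊆ (-(1 + ρ)⁻¹ • c) +ᵥ (ρ * mdiam B K / (1 + ρ)) • B := by
    refine (hB.subset_vadd_smul_iff (by positivity)).mpr fun x hx => ?_
    obtain ⟨_, ⟨k, hk, rfl⟩, hxk⟩ := h (neg_mem_neg.mpr hx)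
    have hc : c = -x - ρ • k := eq_sub_of_add_eq hxk
    -- the centre `-c / (1 + ρ)` divides the segment from `x` to `k ∈ K` in the ratio `ρ : 1`
    have hdiff : x - -(1 + ρ)⁻¹ • c = (ρ / (1 + ρ)) • (x - k) := by
      rw [hc]
      match_scalars <;> field_simp; ring
    rw [hdiff, gauge_smul_eq_mul (by positivity), mul_div_right_comm]
    exact mul_le_mul_of_nonneg_left (hB.gauge_sub_le_mdiam hK hx hk) (by positivity)
  have hR := circum_le (by positivity) hcover
  rwa [le_div_iff₀ h1ρ] at hR

namespace IsCompleteBody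

variable (hB : IsSymUnitBall B) (hK : IsCompleteBody B K)
include hB hK

theorem vadd_smul_subset {ρ : ℝ} (hρ : 0 < ρ) (hρD : ρ < mdiam B K) {c : V n}
    (hsub : K ⊆ c +ᵥ ρ • B) : c +ᵥ (mdiam B K - ρ) • B ⊆ K := by
  intro z hz
  by_contra hzK
  have hzc : gauge B (c - z) ≤ mdiam B K - ρ := by
    rw [hB.gauge_sub_comm]; exact (hB.mem_vadd_smul_iff (sub_pos.mpr hρD)).mp hz
  refine (hK.2 z hzK).not_ge (hB.mdiam_union_singleton_le hK.1.isBounded fun x hx => ?_)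
  calc gauge B (x - z) ≤ gauge B (x - c) + gauge B (c - z) := hB.gauge_sub_le x c z
    _ ≤ ρ + (mdiam B K - ρ) := add_le_add ((hB.subset_vadd_smul_iff hρ).mp hsub x hx) hzc
    _ = mdiam B K := by ring

theorem neg_subset_vadd_smul {ρ : ℝ} (hρ : 0 < ρ) (hρD : ρ < mdiam B K) {c : V n}
    (hsub : K ⊆ c +ᵥ ρ • B) :
    -K ⊆ -((ρ / (mdiam B K - ρ) + 1) • c) +ᵥ (ρ / (mdiam B K - ρ)) • K := by
  set s := ρ / (mdiam B K - ρ)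
  have hs : s * (mdiam B K - ρ) = ρ := div_mul_cancel₀ _ (sub_pos.mpr hρD).ne'
  intro w hw
  obtain ⟨_, ⟨b, hb, rfl⟩, hwb⟩ := hsub hw
  -- `w = -c - ρ b` is the image of the antipodal point `c - (D - ρ) b ∈ K`
  -- under the homothety `z ↦ s z - (s + 1) c`
  have hk : c +ᵥ (mdiam B K - ρ) • -b ∈ K :=
    hK.vadd_smul_subset hB hρ hρD hsub ⟨_, smul_mem_smul_set (hB.neg_mem hb), rfl⟩
  refine ⟨_, smul_mem_smul_set hk, ?_⟩
  simp only [vadd_eq_add, smul_add, smul_smul, hs] at hwb ⊢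
  linear_combination (norm := module) -hwb

theorem asym_le_div {ρ : ℝ} (hρ : 0 < ρ) (hρD : ρ < mdiam B K) {c : V n}
    (hsub : K ⊆ c +ᵥ ρ • B) : asym K ≤ ρ / (mdiam B K - ρ) :=
  asym_le (div_pos hρ (sub_pos.mpr hρD)) (hK.neg_subset_vadd_smul hB hρ hρD hsub)

theorem asym_eq [Nontrivial (V n)] : asym K = circum B K / (mdiam B K - circum B K) := by
  have hRD := hB.circum_lt_mdiam hK.1
  obtain ⟨ρ, -, hρR, hρS⟩ :=
    exists_seq_tendsto_sInf (hB.circum_set_nonempty hK.1.isBounded) ⟨0, fun _ h => h.1.le⟩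
  have hlim : Tendsto (fun k => ρ k / (mdiam B K - ρ k)) atTop
      (𝓝 (circum B K / (mdiam B K - circum B K))) :=
    hρR.div (tendsto_const_nhds.sub hρR) (sub_pos.mpr hRD).ne'
  have hsmall : ∀ᶠ k in atTop, ρ k < mdiam B K := hρR.eventually_lt_const hRD
  have hupper : ∀ᶠ k in atTop, asym K ≤ ρ k / (mdiam B K - ρ k) := by
    filter_upwards [hsmall] with k hk
    obtain ⟨hpos, c, hc⟩ := hρS k
    exact hK.asym_le_div hB hpos hk hc
  refine le_antisymm (ge_of_tendsto hlim hupper) (le_csInf ?_ ?_)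
  · obtain ⟨k, hk⟩ := hsmall.exists
    obtain ⟨hpos, c, hc⟩ := hρS k
    exact ⟨_, div_pos hpos (sub_pos.mpr hk), _, hK.neg_subset_vadd_smul hB hpos hk hc⟩
  · rintro s ⟨hs, c, hc⟩
    have := hB.circum_mul_one_add_le hK.1.isBounded (hB.mdiam_pos hK.1) hs hc
    rw [div_le_iff₀ (sub_pos.mpr hRD)]
    linarith

theorem jungRatio_eq : jungRatio B K = asym K / (asym K + 1) := by
  rcases subsingleton_or_nontrivial (V n) with _ | _
  · rw [jungRatio, mdiam_eq_zero_of_subsingleton, div_zero,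
      asym_eq_zero_of_subsingleton hK.1.nonempty, zero_div]
  · have hRD := hB.circum_lt_mdiam hK.1
    rw [jungRatio, hK.asym_eq hB]
    field_simp [(sub_pos.mpr hRD).ne']
    ring

end IsCompleteBody

theorem IsSymUnitBall.gauge_centroid_sub_le (hB : IsSymUnitBall B) {ι : Type*} {s : Finset ι}
    (f : ι → V n) {j : ι} (hj : j ∈ s) {D : ℝ}
    (hD : ∀ i ∈ s, gauge B (f i - f j) ≤ D) :
    gauge B ((s.card : ℝ)⁻¹ • ∑ i ∈ s, f i - f j) ≤ (s.card - 1) / s.card * D := by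
  classical
  have hcard : 0 < s.card := Finset.card_pos.mpr ⟨j, hj⟩
  have hcard' : (0 : ℝ) < s.card := by exact_mod_cast hcard
  have hcentroid : (s.card : ℝ)⁻¹ • ∑ i ∈ s, f i - f j
      = (s.card : ℝ)⁻¹ • ∑ i ∈ s, (f i - f j) := by
    rw [Finset.sum_sub_distrib, Finset.sum_const, smul_sub, ← Nat.cast_smul_eq_nsmul ℝ,
      smul_smul, inv_mul_cancel₀ hcard'.ne', one_smul]
  have hsum : ∑ i ∈ s, gauge B (f i - f j) ≤ (s.card - 1) * D := by
    rw [← Finset.add_sum_erase s _ hj, sub_self, gauge_zero, zero_add]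
    calc ∑ i ∈ s.erase j, gauge B (f i - f j) ≤ ∑ _i ∈ s.erase j, D :=
          Finset.sum_le_sum fun i hi => hD i (Finset.mem_of_mem_erase hi)
      _ = (s.card - 1) * D := by
          rw [Finset.sum_const, Finset.card_erase_of_mem hj, nsmul_eq_mul, Nat.cast_sub hcard,
            Nat.cast_one]
  rw [hcentroid, gauge_smul_eq_mul (by positivity)]
  calc (s.card : ℝ)⁻¹ * gauge B (∑ i ∈ s, (f i - f j))
      ≤ (s.card : ℝ)⁻¹ * ∑ i ∈ s, gauge B (f i - f j) := by
        gcongr; exact gauge_sum_le hB.1.1 hB.absorbent _ _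
    _ ≤ (s.card : ℝ)⁻¹ * ((s.card - 1) * D) := by gcongr
    _ = (s.card - 1) / s.card * D := by ring

/-- Bohnenblust's inequality, from Helly's theorem applied to the balls of radius
`n / (n + 1) * D` around the points of `K`, any `n + 1` of which contain their centroid. -/
theorem IsSymUnitBall.circum_le_mul_mdiam [Nontrivial (V n)] (hB : IsSymUnitBall B)
    (hK : IsConvexBody K) : circum B K ≤ n / (n + 1) * mdiam B K := by
  have hn : (0 : ℝ) < n := by
    exact_mod_cast finrank_euclideanSpace_fin (𝕜 := ℝ) (n := n) ▸ Module.finrank_pos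
  set ρ : ℝ := n / (n + 1) * mdiam B K
  have hρ : 0 < ρ := by have := hB.mdiam_pos hK; positivity
  obtain ⟨c, hc⟩ : (⋂ x : K, (x : V n) +ᵥ ρ • B).Nonempty := by
    refine Convex.helly_theorem_compact' (fun _ => (hB.1.1.smul ρ).vadd _)
      (fun _ => (hB.1.2.1.smul ρ).vadd _) fun I hI => ?_
    rcases I.eq_empty_or_nonempty with rfl | ⟨j0, hj0⟩
    · simp
    rw [finrank_euclideanSpace_fin] at hI
    refine ⟨(I.card : ℝ)⁻¹ • ∑ i ∈ I, (i : V n), mem_iInter₂.mpr fun j hj =>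
      (hB.mem_vadd_smul_iff hρ).mpr ?_⟩
    have hcard : (1 : ℝ) ≤ I.card := by exact_mod_cast Finset.card_pos.mpr ⟨j0, hj0⟩
    have hcard' : (I.card : ℝ) ≤ n + 1 := by exact_mod_cast hI
    calc gauge B ((I.card : ℝ)⁻¹ • ∑ i ∈ I, (i : V n) - j)
        ≤ (I.card - 1) / I.card * mdiam B K :=
          hB.gauge_centroid_sub_le _ hj fun i _ => hB.gauge_sub_le_mdiam hK.isBounded i.2 j.2
      _ ≤ n / (n + 1) * mdiam B K := by
          refine mul_le_mul_of_nonneg_right ?_ mdiam_nonneg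
          rw [div_le_div_iff₀ (by linarith) (by linarith)]
          linarith
  refine circum_le hρ (c := c) ((hB.subset_vadd_smul_iff hρ).mpr fun x hx => ?_)
  rw [hB.gauge_sub_comm]
  exact (hB.mem_vadd_smul_iff hρ).mp (mem_iInter.mp hc ⟨x, hx⟩)

theorem IsCompleteBody.asym_le_dim [Nontrivial (V n)] (hB : IsSymUnitBall B)
    (hK : IsCompleteBody B K) : asym K ≤ n := by
  have hRD := hB.circum_lt_mdiam hK.1
  have hBohnenblust := hB.circum_le_mul_mdiam hK.1
  rw [div_mul_eq_mul_div, le_div_iff₀ (by positivity)] at hBohnenblust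
  rw [hK.asym_eq hB, div_le_iff₀ (sub_pos.mpr hRD)]
  linarith

theorem isConvexBody_closure {S : Set (V n)} (hconv : Convex ℝ S) (hS : IsBounded S)
    (hint : (interior S).Nonempty) : IsConvexBody (closure S) :=
  ⟨hconv.closure, hS.isCompact_closure, hint.mono (interior_mono subset_closure)⟩

section Completion

variable [Nontrivial (V n)] (hB : IsSymUnitBall B)
include hB

theorem IsSymUnitBall.closure_sUnion_of_isChain (hK : IsConvexBody K) {c : Set (Set (V n))}
    (hcS : ∀ L ∈ c, IsConvexBody L ∧ K ⊆ L ∧ mdiam B L ≤ mdiam B K)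
    (hc : IsChain (· ⊆ ·) c) (hne : c.Nonempty) :
    IsConvexBody (closure (⋃₀ c)) ∧ K ⊆ closure (⋃₀ c) ∧
      mdiam B (closure (⋃₀ c)) ≤ mdiam B K := by
  obtain ⟨L₀, hL₀⟩ := hne
  obtain ⟨x₀, hx₀⟩ := hK.nonempty
  have hKU : K ⊆ ⋃₀ c := (hcS L₀ hL₀).2.1.trans (subset_sUnion_of_mem hL₀)
  have hpair : ∀ x ∈ ⋃₀ c, ∀ y ∈ ⋃₀ c, gauge B (x - y) ≤ mdiam B K := by
    rintro x ⟨L₁, hL₁, hx⟩ y ⟨L₂, hL₂, hy⟩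
    rcases hc.total hL₁ hL₂ with h | h
    · obtain ⟨hL, -, hdiam⟩ := hcS L₂ hL₂
      exact (hB.gauge_sub_le_mdiam hL.isBounded (h hx) hy).trans hdiam
    · obtain ⟨hL, -, hdiam⟩ := hcS L₁ hL₁
      exact (hB.gauge_sub_le_mdiam hL.isBounded hx (h hy)).trans hdiam
  have hball : ⋃₀ c ⊆ x₀ +ᵥ mdiam B K • B :=
    (hB.subset_vadd_smul_iff (hB.mdiam_pos hK)).mpr fun x hx => hpair x hx x₀ (hKU hx₀)
  have hbdd : IsBounded (⋃₀ c) := ((hB.1.2.1.smul _).vadd x₀).isBounded.subset hball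
  have hconv : Convex ℝ (⋃₀ c) := hc.directedOn.convex_sUnion fun L hL => (hcS L hL).1.1
  exact ⟨isConvexBody_closure hconv hbdd (hK.2.2.mono (interior_mono hKU)),
    hKU.trans subset_closure, (hB.mdiam_closure_le hbdd).trans (mdiam_le mdiam_nonneg hpair)⟩

/-- Zorn's lemma on the convex bodies containing `K` with the same diameter: a maximal one is
complete, since otherwise adjoining a point would give a larger one. -/
theorem IsConvexBody.exists_isCompletionOf (hK : IsConvexBody K) : ∃ M, IsCompletionOf B M K := by
  obtain ⟨M, hKM, hmax⟩ := zorn_subset_nonempty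
    {L | IsConvexBody L ∧ K ⊆ L ∧ mdiam B L ≤ mdiam B K}
    (fun c hcS hc hne => ⟨_, hB.closure_sUnion_of_isChain hK hcS hc hne,
      fun _ hL => (subset_sUnion_of_mem hL).trans subset_closure⟩)
    K ⟨hK, subset_rfl, le_rfl⟩
  obtain ⟨hMbody, -, hMdiam⟩ := hmax.prop
  have hdiam : mdiam B M = mdiam B K := le_antisymm hMdiam (hB.mdiam_mono hKM hMbody.isBounded)
  refine ⟨M, ⟨hMbody, fun x hx => lt_of_not_ge fun hle => hx ?_⟩, hKM, hdiam⟩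
  have hbdd₀ : IsBounded (M ∪ {x}) := hMbody.isBounded.union isBounded_singleton
  have hbdd : IsBounded (convexHull ℝ (M ∪ {x})) := isBounded_convexHull.mpr hbdd₀
  have hM : M ⊆ closure (convexHull ℝ (M ∪ {x})) :=
    (subset_union_left.trans (subset_convexHull ℝ _)).trans subset_closure
  have hbody : IsConvexBody (closure (convexHull ℝ (M ∪ {x}))) :=
    isConvexBody_closure (convex_convexHull ℝ _) hbdd
      (hMbody.2.2.mono (interior_mono (subset_union_left.trans (subset_convexHull ℝ _))))
  have hdiam' : mdiam B (closure (convexHull ℝ (M ∪ {x}))) ≤ mdiam B K :=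
    calc _ ≤ mdiam B (convexHull ℝ (M ∪ {x})) := hB.mdiam_closure_le hbdd
      _ ≤ mdiam B (M ∪ {x}) := hB.mdiam_convexHull_le hbdd₀
      _ ≤ mdiam B K := hdiam ▸ hle
  exact hmax.le_of_ge ⟨hbody, hKM.trans hM, hdiam'⟩ hM
    (subset_closure (subset_convexHull ℝ _ (mem_union_right M rfl)))

end Completion

theorem IsCompletionOf.jungRatio_le (hB : IsSymUnitBall B) (h : IsCompletionOf B L K) :
    jungRatio B K ≤ jungRatio B L := by
  rw [jungRatio, jungRatio, h.2.2]
  exact div_le_div_of_nonneg_right (hB.circum_mono h.2.1 h.1.1.isBounded) mdiam_nonneg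

theorem IsSymUnitBall.jungConst_eq_sSup_image [Nontrivial (V n)] (hB : IsSymUnitBall B) :
    jungConst B = sSup ((fun s : ℝ => s / (s + 1)) ''
      {s : ℝ | ∃ K : Set (V n), IsCompleteBody B K ∧ s = asym K}) := by
  refine csSup_eq_csSup_of_forall_exists_le ?_ ?_
  · rintro _ ⟨K, hK, rfl⟩
    obtain ⟨M, hM⟩ := hK.exists_isCompletionOf hB
    refine ⟨_, ⟨_, ⟨M, hM.1, rfl⟩, rfl⟩, ?_⟩
    exact (hM.jungRatio_le hB).trans_eq (hM.1.jungRatio_eq hB)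
  · rintro _ ⟨_, ⟨M, hM, rfl⟩, rfl⟩
    exact ⟨_, ⟨M, hM.1, (hM.jungRatio_eq hB).symm⟩, le_rfl⟩

theorem jungConst_eq (hB : IsSymUnitBall B) :
    jungConst B = asymConst B / (asymConst B + 1) := by
  rcases subsingleton_or_nontrivial (V n) with _ | _
  · have sSup_eq_zero : ∀ S : Set ℝ, (∀ x ∈ S, x = 0) → sSup S = 0 := fun S hS =>
      le_antisymm (Real.sSup_nonpos fun x hx => (hS x hx).le)
        (Real.sSup_nonneg fun x hx => (hS x hx).ge)
    have hJ : jungConst B = 0 := sSup_eq_zero _ fun _ ⟨_, _, hj⟩ => by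
      rw [hj, jungRatio, mdiam_eq_zero_of_subsingleton, div_zero]
    have hA : asymConst B = 0 := sSup_eq_zero _ fun _ ⟨_, hK, hs⟩ =>
      hs ▸ asym_eq_zero_of_subsingleton hK.1.nonempty
    rw [hJ, hA]
    norm_num
  · set A := {s : ℝ | ∃ K : Set (V n), IsCompleteBody B K ∧ s = asym K}
    set f : ℝ → ℝ := fun s => s / (s + 1)
    have hA_ne : A.Nonempty := by
      obtain ⟨M, hM⟩ := hB.1.exists_isCompletionOf hB
      exact ⟨_, M, hM.1, rfl⟩
    have hA_bdd : BddAbove A := ⟨n, fun _ ⟨K, hK, hs⟩ => hs ▸ hK.asym_le_dim hB⟩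
    have hA_nonneg : ∀ s ∈ A, 0 ≤ s := fun _ ⟨_, _, hs⟩ => hs ▸ asym_nonneg
    have hf_mono : MonotoneOn f A := fun a ha b hb hab => by
      have := hA_nonneg a ha
      rw [div_le_div_iff₀ (by linarith) (by linarith)]
      linarith
    have hsSup : 0 < sSup A + 1 := by linarith [Real.sSup_nonneg hA_nonneg]
    have hf_cont : ContinuousWithinAt f A (sSup A) :=
      (continuousAt_id.div (continuousAt_id.add continuousAt_const) hsSup.ne').continuousWithinAt
    rw [hB.jungConst_eq_sSup_image, asymConst]
    exact (hf_mono.map_csSup_of_continuousWithinAt hf_cont hA_ne hA_bdd).symm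

/-- For complete bodies `j(K) = s(K)/(s(K)+1)`; hence
`j(Mⁿ) = s(Mⁿ)/(s(Mⁿ)+1)`. -/
theorem stmt4 {n : ℕ} (B : Set (V n)) (hB : IsSymUnitBall B) :
    (∀ K : Set (V n), IsCompleteBody B K →
      jungRatio B K = asym K / (asym K + 1)) ∧
    jungConst B = asymConst B / (asymConst B + 1) :=
  ⟨fun _ hK => hK.jungRatio_eq hB, jungConst_eq hB⟩
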